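/- arXiv:2508.16186 — 4 statements merged into one kernel-verified Lean document; each statement's English description precedes it below -/
import Mathlib

section
/- Let n ≥ 1 be an integer, let α₁, …, αₙ > 0 and τ₁, …, τₙ > 0 be real numbers, and set S(t) = Σᵢ₌₁ⁿ αᵢ · h(t/τᵢ) for t ∈ ℝ. If S is not differentiable at a point τ > 0, then S is not differentiable at τ/4 or S is not differentiable at 4τ. -/
/-- The inverse hyperbolic tangent. -/
noncomputable def artanh (x : ℝ) : ℝ := (1 / 2) * Real.log ((1 + x) / (1 - x))

/-- The Hall distribution pdf. -/
noncomputable def hallPdf (t : ℝ) : ℝ :=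
  if t < 1 then 0
  else if t < 4 then 2 * Real.log t / t ^ 2
  else 2 * Real.log t / t ^ 2 - 4 / t ^ 2 * artanh (Real.sqrt (1 - 4 / t))

/-!
Away from `1` and `4` the Hall pdf `h` is smooth. At `1` its derivative jumps from `0` to `2`;
at `4` the term `artanh (√(1 - 4/t)) ~ √(t - 4)` drives the right difference quotient to `-∞`.
Since all weights `αᵢ` are positive these singularities cannot cancel in `S`, so `S` fails to be
differentiable exactly at the points `τᵢ` and `4τᵢ`. If `t = τᵢ` then `4t = 4τᵢ`, and if
`t = 4τᵢ` then `t/4 = τᵢ`.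
-/

open Set Filter Topology

lemma hallPdf_of_lt_one {x : ℝ} (hx : x < 1) : hallPdf x = 0 := if_pos hx

lemma hallPdf_of_mem_Ico {x : ℝ} (hx : x ∈ Ico 1 4) : hallPdf x = 2 * Real.log x / x ^ 2 := by
  simp [hallPdf, not_lt.2 hx.1, hx.2]

lemma hallPdf_of_le_one {x : ℝ} (hx : x ≤ 1) : hallPdf x = 0 := by
  rcases hx.lt_or_eq with hx | rfl
  · exact hallPdf_of_lt_one hx
  · simp [hallPdf_of_mem_Ico (show (1 : ℝ) ∈ Ico 1 4 by norm_num)]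

lemma hallPdf_of_four_le {x : ℝ} (hx : 4 ≤ x) :
    hallPdf x = 2 * Real.log x / x ^ 2 - 4 / x ^ 2 * artanh (√(1 - 4 / x)) := by
  simp [hallPdf, not_lt.2 hx, show ¬ x < 1 by linarith]

lemma artanh_zero : artanh 0 = 0 := by simp [artanh]

lemma hallPdf_four : hallPdf 4 = 2 * Real.log 4 / 4 ^ 2 := by
  simp [hallPdf_of_four_le le_rfl, artanh_zero]

lemma differentiableAt_artanh {x : ℝ} (hx : x ∈ Ioo (-1) 1) : DifferentiableAt ℝ artanh x := by
  have hquot : (1 + x) / (1 - x) ≠ 0 := (div_pos (by linarith [hx.1]) (by linarith [hx.2])).ne'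
  unfold artanh
  fun_prop (disch := first | exact hquot | linarith [hx.2])

lemma half_le_artanh {u : ℝ} (h0 : 0 ≤ u) (h1 : u < 1) : u / 2 ≤ artanh u := by
  have hlog_one_add : 0 ≤ Real.log (1 + u) := Real.log_nonneg (by linarith)
  have hlog_one_sub : Real.log (1 - u) ≤ -u := by
    simpa using Real.log_le_sub_one_of_pos (show 0 < 1 - u by linarith)
  rw [artanh, Real.log_div (by linarith) (by linarith)]
  linarith

lemma differentiableAt_two_mul_log_div_sq {x : ℝ} (hx : x ≠ 0) :
    DifferentiableAt ℝ (fun y => 2 * Real.log y / y ^ 2) x := by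
  fun_prop (disch := first | exact hx | positivity)

lemma differentiableAt_hallPdf {x : ℝ} (h1 : x ≠ 1) (h4 : x ≠ 4) :
    DifferentiableAt ℝ hallPdf x := by
  rcases h1.lt_or_gt with hx1 | hx1
  · refine (differentiableAt_const 0).congr_of_eventuallyEq ?_
    filter_upwards [Iio_mem_nhds hx1] with y hy using hallPdf_of_lt_one hy
  rcases h4.lt_or_gt with hx4 | hx4
  · refine (differentiableAt_two_mul_log_div_sq (by linarith)).congr_of_eventuallyEq ?_
    filter_upwards [Ioo_mem_nhds hx1 hx4] with y hy using hallPdf_of_mem_Ico ⟨hy.1.le, hy.2⟩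
  · have hx0 : x ≠ 0 := by linarith
    have hpos : 0 < 1 - 4 / x := by rw [sub_pos, div_lt_one (by linarith)]; exact hx4
    have hsqrt_mem : √(1 - 4 / x) ∈ Ioo (-1) 1 := by
      refine ⟨by linarith [Real.sqrt_nonneg (1 - 4 / x)], ?_⟩
      rw [Real.sqrt_lt' one_pos]
      have : 0 < 4 / x := by positivity
      linarith
    have hsqrt : DifferentiableAt ℝ (fun y => √(1 - 4 / y)) x := by
      fun_prop (disch := first | exact hx0 | exact hpos.ne')
    have hartanh : DifferentiableAt ℝ (fun y => artanh (√(1 - 4 / y))) x :=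
      (differentiableAt_artanh hsqrt_mem).comp (g := artanh) x hsqrt
    have hformula : DifferentiableAt ℝ
        (fun y => 2 * Real.log y / y ^ 2 - 4 / y ^ 2 * artanh (√(1 - 4 / y))) x := by
      fun_prop (disch := first | exact hx0 | positivity)
    refine hformula.congr_of_eventuallyEq ?_
    filter_upwards [Ioi_mem_nhds hx4] with y hy using hallPdf_of_four_le hy.le

lemma inv_sqrt_le_artanh_div_sub_four {x : ℝ} (hx : 4 < x) :
    2 / x ^ 3 * (√(1 - 4 / x))⁻¹ ≤ 4 / x ^ 2 * artanh (√(1 - 4 / x)) / (x - 4) := by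
  set u := √(1 - 4 / x)
  have hx0 : 0 < x := by linarith
  have hu_sq : u ^ 2 = 1 - 4 / x := Real.sq_sqrt (by rw [sub_nonneg, div_le_one hx0]; linarith)
  have hu_pos : 0 < u := Real.sqrt_pos.2 (by rw [sub_pos, div_lt_one hx0]; exact hx)
  have hu_lt : u < 1 := by nlinarith [show 0 < 4 / x by positivity]
  have hx_sub : x - 4 = x * u ^ 2 := by rw [hu_sq]; field_simp
  calc 2 / x ^ 3 * u⁻¹ = 4 / x ^ 2 * (u / 2) / (x - 4) := by
        rw [hx_sub]; field_simp; norm_num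
    _ ≤ 4 / x ^ 2 * artanh u / (x - 4) := by
        gcongr
        exact half_le_artanh hu_pos.le hu_lt

lemma tendsto_sqrt_one_sub_four_div : Tendsto (fun x => √(1 - 4 / x)) (𝓝[>] 4) (𝓝[>] 0) := by
  refine tendsto_nhdsWithin_of_tendsto_nhds_of_eventually_within _ ?_ ?_
  · have hcont : ContinuousAt (fun x : ℝ => √(1 - 4 / x)) 4 := by fun_prop (disch := norm_num)
    simpa using hcont.tendsto.mono_left nhdsWithin_le_nhds
  · filter_upwards [self_mem_nhdsWithin] with x (hx : 4 < x)
    exact Real.sqrt_pos.2 (by rw [sub_pos, div_lt_one (by linarith)]; exact hx)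

lemma tendsto_artanh_div_sub_four_atTop :
    Tendsto (fun x => 4 / x ^ 2 * artanh (√(1 - 4 / x)) / (x - 4)) (𝓝[>] 4) atTop := by
  have hcoef : Tendsto (fun x : ℝ => 2 / x ^ 3) (𝓝[>] 4) (𝓝 (2 / 4 ^ 3)) :=
    (ContinuousAt.tendsto (by fun_prop (disch := norm_num))).mono_left nhdsWithin_le_nhds
  refine tendsto_atTop_mono' _ ?_
    (hcoef.pos_mul_atTop (by norm_num) (tendsto_inv_nhdsGT_zero.comp tendsto_sqrt_one_sub_four_div))
  filter_upwards [self_mem_nhdsWithin] with x hx using inv_sqrt_le_artanh_div_sub_four hx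

lemma tendsto_slope_hallPdf_four : Tendsto (slope hallPdf 4) (𝓝[>] 4) atBot := by
  set g : ℝ → ℝ := fun x => 2 * Real.log x / x ^ 2
  have hslope_g : Tendsto (slope g 4) (𝓝[>] 4) (𝓝 (deriv g 4)) :=
    (hasDerivAt_iff_tendsto_slope.1 (differentiableAt_two_mul_log_div_sq (by norm_num)).hasDerivAt)
      |>.mono_left (nhdsWithin_mono 4 fun _ hy => ne_of_gt hy)
  refine (hslope_g.add_atBot (tendsto_neg_atTop_atBot.comp
    tendsto_artanh_div_sub_four_atTop)).congr' ?_
  filter_upwards [self_mem_nhdsWithin] with x (hx : 4 < x)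
  have hne : x - 4 ≠ 0 := by linarith
  simp only [Function.comp_apply, slope_def_field, hallPdf_of_four_le hx.le, hallPdf_four, g]
  field_simp
  ring

lemma hasDerivWithinAt_hallPdf_Ici_one : HasDerivWithinAt hallPdf 2 (Ici 1) 1 := by
  have hderiv : HasDerivAt (fun x : ℝ => 2 * Real.log x / x ^ 2) 2 1 := by
    have := ((Real.hasDerivAt_log one_ne_zero).const_mul 2).div (hasDerivAt_pow 2 1) (by norm_num)
    norm_num at this
    exact this
  refine hderiv.hasDerivWithinAt.congr_of_eventuallyEq ?_ (hallPdf_of_mem_Ico (by norm_num))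
  filter_upwards [self_mem_nhdsWithin,
    mem_nhdsWithin_of_mem_nhds (Iio_mem_nhds (show (1 : ℝ) < 4 by norm_num))]
    with y hy1 hy4 using hallPdf_of_mem_Ico ⟨hy1, hy4⟩

lemma hasDerivWithinAt_hallPdf_Iic_one : HasDerivWithinAt hallPdf 0 (Iic 1) 1 := by
  refine (hasDerivWithinAt_const (1 : ℝ) _ (0 : ℝ)).congr_of_eventuallyEq ?_
    (hallPdf_of_le_one le_rfl)
  filter_upwards [self_mem_nhdsWithin] with y hy using hallPdf_of_le_one hy

lemma slope_comp_div (f : ℝ → ℝ) {c : ℝ} (hc : c ≠ 0) (x y : ℝ) :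
    slope (fun y => f (y / c)) x y = c⁻¹ * slope f (x / c) (y / c) := by
  rcases eq_or_ne y x with rfl | hxy
  · simp
  have : y / c - x / c ≠ 0 := by rw [← sub_div]; exact div_ne_zero (sub_ne_zero.2 hxy) hc
  rw [slope_def_field, slope_def_field, ← sub_div]
  field_simp

lemma tendsto_slope_finset_sum_atBot {ι : Type*} {s : Finset ι} (hs : s.Nonempty)
    {f : ι → ℝ → ℝ} {p : ℝ} {l : Filter ℝ} (h : ∀ i ∈ s, Tendsto (slope (f i) p) l atBot) :
    Tendsto (slope (fun x => ∑ i ∈ s, f i x) p) l atBot := by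
  have hslope : slope (fun x => ∑ i ∈ s, f i x) p = fun x => ∑ i ∈ s, slope (f i) p x := by
    ext x
    simp only [slope_def_field, ← Finset.sum_sub_distrib, Finset.sum_div]
  rw [hslope]
  clear hslope
  induction hs using Finset.Nonempty.cons_induction with
  | singleton i => simpa using h i (by simp)
  | cons i s his hs ih =>
    simp only [Finset.sum_cons]
    exact (h i (by simp)).atBot_add_atBot (ih fun j hj => h j (by simp [hj]))

lemma not_hasDerivWithinAt_Ici_of_tendsto_slope_atBot {f : ℝ → ℝ} {p f' : ℝ}
    (h : Tendsto (slope f p) (𝓝[>] p) atBot) : ¬ HasDerivWithinAt f f' (Ici p) p := by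
  intro hf
  refine not_tendsto_nhds_of_tendsto_atBot h f' ?_
  exact (hasDerivWithinAt_iff_tendsto_slope.1 hf).mono_left
    (nhdsWithin_mono p fun _ hy => ⟨mem_Ici.2 (mem_Ioi.1 hy).le, (mem_Ioi.1 hy).ne'⟩)

lemma not_differentiableAt_of_hasDerivWithinAt_Iic_Ici {f : ℝ → ℝ} {p L R : ℝ}
    (hL : HasDerivWithinAt f L (Iic p) p) (hR : HasDerivWithinAt f R (Ici p) p) (hLR : L ≠ R) :
    ¬ DifferentiableAt ℝ f p := by
  intro hf
  apply hLR
  rw [← (uniqueDiffOn_Iic p p self_mem_Iic).eq_deriv _ hf.hasDerivAt.hasDerivWithinAt hL,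
    (uniqueDiffOn_Ici p p self_mem_Ici).eq_deriv _ hf.hasDerivAt.hasDerivWithinAt hR]

lemma differentiableAt_hallPdf_div {c p : ℝ} (h1 : p ≠ c) (h4 : p ≠ 4 * c) :
    DifferentiableAt ℝ (fun y => hallPdf (y / c)) p := by
  rcases eq_or_ne c 0 with rfl | hc
  · simp
  refine (differentiableAt_hallPdf ?_ ?_).comp p (differentiableAt_id.div_const c)
  · rwa [Ne, div_eq_one_iff_eq hc]
  · rwa [Ne, div_eq_iff hc]

lemma hasDerivWithinAt_hallPdf_div_Ici_self {c : ℝ} (hc : 0 < c) :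
    HasDerivWithinAt (fun y => hallPdf (y / c)) (2 / c) (Ici c) c := by
  have houter : HasDerivWithinAt hallPdf 2 (Ici (c / c)) (c / c) := by
    rw [div_self hc.ne']; exact hasDerivWithinAt_hallPdf_Ici_one
  have hmaps : MapsTo (· / c) (Ici c) (Ici (c / c)) := fun _ hy =>
    div_le_div_of_nonneg_right hy hc.le
  simpa only [Function.comp_def, mul_one_div] using
    houter.comp (h := fun y => y / c) c ((hasDerivAt_id c).div_const c).hasDerivWithinAt hmaps

lemma hasDerivWithinAt_hallPdf_div_Iic_self {c : ℝ} (hc : 0 < c) :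
    HasDerivWithinAt (fun y => hallPdf (y / c)) 0 (Iic c) c := by
  have houter : HasDerivWithinAt hallPdf 0 (Iic (c / c)) (c / c) := by
    rw [div_self hc.ne']; exact hasDerivWithinAt_hallPdf_Iic_one
  have hmaps : MapsTo (· / c) (Iic c) (Iic (c / c)) := fun _ hy =>
    div_le_div_of_nonneg_right hy hc.le
  simpa only [Function.comp_def, mul_one_div, zero_div] using
    houter.comp (h := fun y => y / c) c ((hasDerivAt_id c).div_const c).hasDerivWithinAt hmaps

lemma tendsto_slope_hallPdf_div {c : ℝ} (hc : 0 < c) :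
    Tendsto (slope (fun y => hallPdf (y / c)) (4 * c)) (𝓝[>] (4 * c)) atBot := by
  have hdiv : Tendsto (· / c) (𝓝[>] (4 * c)) (𝓝[>] 4) := by
    refine tendsto_nhdsWithin_of_tendsto_nhds_of_eventually_within _ ?_ ?_
    · simpa [hc.ne'] using
        ((continuous_id.div_const c).tendsto (4 * c)).mono_left nhdsWithin_le_nhds
    · filter_upwards [self_mem_nhdsWithin] with y (hy : 4 * c < y)
      exact (lt_div_iff₀ hc).2 hy
  refine ((tendsto_slope_hallPdf_four.comp hdiv).const_mul_atBot (inv_pos.2 hc)).congr fun y => ?_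
  rw [slope_comp_div _ hc.ne', mul_div_cancel_right₀ _ hc.ne', Function.comp_apply]

lemma exists_hasDerivWithinAt_hallPdf_div_Iic_Ici {c p : ℝ} (hc : 0 < c) (h4 : p ≠ 4 * c) :
    ∃ L R, L ≤ R ∧ (p = c → L < R) ∧
      HasDerivWithinAt (fun y => hallPdf (y / c)) L (Iic p) p ∧
      HasDerivWithinAt (fun y => hallPdf (y / c)) R (Ici p) p := by
  rcases eq_or_ne p c with rfl | h1
  · exact ⟨0, 2 / p, by positivity, fun _ => by positivity,
      hasDerivWithinAt_hallPdf_div_Iic_self hc, hasDerivWithinAt_hallPdf_div_Ici_self hc⟩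
  · have hd := (differentiableAt_hallPdf_div h1 h4).hasDerivAt
    exact ⟨_, _, le_rfl, fun h => absurd h h1, hd.hasDerivWithinAt, hd.hasDerivWithinAt⟩

noncomputable def hallMixture {ι : Type*} [Fintype ι] (α τ : ι → ℝ) (s : ℝ) : ℝ :=
  ∑ i, α i * hallPdf (s / τ i)

section hallMixture

variable {ι : Type*} [Fintype ι] {α τ : ι → ℝ} {p : ℝ}

lemma differentiableAt_hallMixture (h : ∀ i, p ≠ τ i ∧ p ≠ 4 * τ i) :
    DifferentiableAt ℝ (hallMixture α τ) p :=
  DifferentiableAt.fun_sum fun i _ =>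
    (differentiableAt_hallPdf_div (h i).1 (h i).2).const_mul (α i)

lemma not_differentiableAt_hallMixture_of_eq_four_mul (hα : ∀ i, 0 < α i) (hτ : ∀ i, 0 < τ i)
    {j : ι} (hj : p = 4 * τ j) : ¬ DifferentiableAt ℝ (hallMixture α τ) p := by
  classical
  set A := Finset.univ.filter fun i => p = 4 * τ i
  set term : ι → ℝ → ℝ := fun i y => α i * hallPdf (y / τ i)
  have hA : Tendsto (slope (fun y => ∑ i ∈ A, term i y) p) (𝓝[>] p) atBot := by
    refine tendsto_slope_finset_sum_atBot ⟨j, by simp [A, hj]⟩ fun i hi => ?_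
    rw [(Finset.mem_filter.1 hi).2]
    refine ((tendsto_slope_hallPdf_div (hτ i)).const_mul_atBot (hα i)).congr fun y => ?_
    simp only [term, slope_def_field]
    ring
  have hAc : ∃ R, HasDerivWithinAt (fun y => ∑ i ∈ Aᶜ, term i y) R (Ici p) p := by
    have hterm : ∀ i ∈ Aᶜ, ∃ R, HasDerivWithinAt (term i) R (Ici p) p := fun i hi => by
      have h4 : p ≠ 4 * τ i := by simpa [A] using hi
      obtain ⟨-, R, -, -, -, hR⟩ := exists_hasDerivWithinAt_hallPdf_div_Iic_Ici (hτ i) h4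
      exact ⟨α i * R, hR.const_mul (α i)⟩
    choose! R hR using hterm
    exact ⟨_, HasDerivWithinAt.fun_sum hR⟩
  obtain ⟨R, hR⟩ := hAc
  -- A derivative of the mixture would give `∑ i ∈ A, term i = mixture - ∑ i ∈ Aᶜ, term i`
  -- a right derivative, against `hA`.
  intro hdiff
  have hsplit :
      (fun y => ∑ i ∈ A, term i y) = fun y => hallMixture α τ y - ∑ i ∈ Aᶜ, term i y := by
    ext y
    rw [hallMixture, ← Finset.sum_add_sum_compl A]
    ring
  refine not_hasDerivWithinAt_Ici_of_tendsto_slope_atBot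
    (f' := deriv (hallMixture α τ) p - R) hA ?_
  rw [hsplit]
  exact hdiff.hasDerivAt.hasDerivWithinAt.sub hR

lemma not_differentiableAt_hallMixture_of_eq (hα : ∀ i, 0 < α i) (hτ : ∀ i, 0 < τ i) {j : ι}
    (hj : p = τ j) (h4 : ∀ i, p ≠ 4 * τ i) : ¬ DifferentiableAt ℝ (hallMixture α τ) p := by
  choose L R hLR hLR_of_eq hL hR using
    fun i => exists_hasDerivWithinAt_hallPdf_div_Iic_Ici (hτ i) (h4 i)
  refine not_differentiableAt_of_hasDerivWithinAt_Iic_Ici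
    (HasDerivWithinAt.fun_sum fun i _ => (hL i).const_mul (α i))
    (HasDerivWithinAt.fun_sum fun i _ => (hR i).const_mul (α i)) (ne_of_lt ?_)
  exact Finset.sum_lt_sum (fun i _ => mul_le_mul_of_nonneg_left (hLR i) (hα i).le)
    ⟨j, Finset.mem_univ j, mul_lt_mul_of_pos_left (hLR_of_eq j hj) (hα j)⟩

theorem not_differentiableAt_hallMixture_iff (hα : ∀ i, 0 < α i) (hτ : ∀ i, 0 < τ i) :
    ¬ DifferentiableAt ℝ (hallMixture α τ) p ↔ ∃ i, p = τ i ∨ p = 4 * τ i := by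
  refine ⟨fun h => ?_, fun ⟨j, hj⟩ => ?_⟩
  · by_contra! hne
    exact h (differentiableAt_hallMixture hne)
  · by_cases h4 : ∃ i, p = 4 * τ i
    · obtain ⟨i, hi⟩ := h4
      exact not_differentiableAt_hallMixture_of_eq_four_mul hα hτ hi
    · push Not at h4
      exact not_differentiableAt_hallMixture_of_eq hα hτ (hj.resolve_right (h4 j)) h4

end hallMixture

theorem hall_sum_nonsmooth_propagates_general (n : ℕ) (α τ : Fin n → ℝ)
    (hα : ∀ i, 0 < α i) (hτ : ∀ i, 0 < τ i) (t : ℝ)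
    (hnd : ¬ DifferentiableAt ℝ (fun s : ℝ => ∑ i, α i * hallPdf (s / τ i)) t) :
    ¬ DifferentiableAt ℝ (fun s : ℝ => ∑ i, α i * hallPdf (s / τ i)) (t / 4) ∨
    ¬ DifferentiableAt ℝ (fun s : ℝ => ∑ i, α i * hallPdf (s / τ i)) (4 * t) := by
  have hkey (p : ℝ) := not_differentiableAt_hallMixture_iff (p := p) hα hτ
  obtain ⟨i, hi | hi⟩ := (hkey t).1 hnd
  · exact Or.inr ((hkey _).2 ⟨i, Or.inr (by rw [hi])⟩)
  · exact Or.inl ((hkey _).2 ⟨i, Or.inl (by rw [hi]; ring)⟩)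

/-- If a finite positive combination of scaled Hall distributions is not differentiable at a
point `τ > 0`, then it is not differentiable at `τ/4` or at `4τ`. -/
theorem hall_sum_nonsmooth_propagates (n : ℕ) (hn : 1 ≤ n) (α τ : Fin n → ℝ)
    (hα : ∀ i, 0 < α i) (hτ : ∀ i, 0 < τ i) (t : ℝ) (ht : 0 < t)
    (hnd : ¬ DifferentiableAt ℝ (fun s : ℝ => ∑ i, α i * hallPdf (s / τ i)) t) :
    ¬ DifferentiableAt ℝ (fun s : ℝ => ∑ i, α i * hallPdf (s / τ i)) (t / 4) ∨
    ¬ DifferentiableAt ℝ (fun s : ℝ => ∑ i, α i * hallPdf (s / τ i)) (4 * t) :=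
  hall_sum_nonsmooth_propagates_general n α τ hα hτ t hnd
end

section
/- At t = 4, the left-hand derivative of h, lim_{ε→0⁺} (h(4) − h(4−ε))/ε, equals (1 − 4 log 2)/32, while the right-hand difference quotient (h(4+ε) − h(4))/ε tends to −∞ as ε → 0⁺. In particular h is not differentiable at t = 4. -/
open Filter Set Topology

noncomputable def hallLogTerm (t : ℝ) : ℝ := 2 * Real.log t / t ^ 2

noncomputable def hallArtanhTerm (t : ℝ) : ℝ := 4 / t ^ 2 * artanh (Real.sqrt (1 - 4 / t))

lemma hallPdf_of_mem_Ico_s5 {t : ℝ} (h1 : 1 ≤ t) (h4 : t < 4) : hallPdf t = hallLogTerm t := by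
  rw [hallPdf, if_neg h1.not_gt, if_pos h4, hallLogTerm]

lemma hallPdf_of_four_le_s5 {t : ℝ} (h4 : 4 ≤ t) :
    hallPdf t = hallLogTerm t - hallArtanhTerm t := by
  rw [hallPdf, if_neg (by linarith), if_neg h4.not_gt, hallLogTerm, hallArtanhTerm]

@[simp]
lemma hallArtanhTerm_four : hallArtanhTerm 4 = 0 := by
  norm_num [hallArtanhTerm, artanh]

lemma hallPdf_four_s5 : hallPdf 4 = hallLogTerm 4 := by
  simp [hallPdf_of_four_le_s5 le_rfl]

lemma hasDerivAt_hallLogTerm {t : ℝ} (ht : t ≠ 0) :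
    HasDerivAt hallLogTerm (2 * (1 - 2 * Real.log t) / t ^ 3) t := by
  refine (((Real.hasDerivAt_log ht).const_mul 2).div (hasDerivAt_pow 2 t)
    (pow_ne_zero 2 ht)).congr_deriv ?_
  field_simp
  ring

lemma hasDerivAt_hallLogTerm_four :
    HasDerivAt hallLogTerm ((1 - 4 * Real.log 2) / 32) 4 := by
  convert hasDerivAt_hallLogTerm (by norm_num : (4 : ℝ) ≠ 0) using 1
  rw [show Real.log 4 = 2 * Real.log 2 by
    rw [show (4 : ℝ) = 2 ^ 2 by norm_num, Real.log_pow, Nat.cast_ofNat]]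
  ring

lemma half_le_artanh_s5 {x : ℝ} (hx₀ : 0 ≤ x) (hx₁ : x < 1) : x / 2 ≤ artanh x := by
  have h1x : 0 < 1 - x := by linarith
  have hlog_one_sub : Real.log (1 - x) ≤ -x := by
    linarith [Real.log_le_sub_one_of_pos h1x]
  have hlog_one_add : 0 ≤ Real.log (1 + x) := Real.log_nonneg (by linarith)
  rw [artanh, Real.log_div (by linarith) h1x.ne']
  linarith

lemma sqrt_sub_four_le_hallArtanhTerm {t : ℝ} (h4 : 4 ≤ t) (h5 : t ≤ 5) :
    2 / 75 * Real.sqrt (t - 4) ≤ hallArtanhTerm t := by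
  have ht : 0 < t := by linarith
  have hx_lt_one : Real.sqrt (1 - 4 / t) < 1 := by
    rw [Real.sqrt_lt' one_pos, one_pow]
    have : 0 < 4 / t := by positivity
    linarith
  -- `(t - 4) / t ≥ (t - 4) / 9`
  have hx_ge : Real.sqrt (t - 4) / 3 ≤ Real.sqrt (1 - 4 / t) := by
    have hfrac : 1 - 4 / t = (t - 4) / t := by field_simp
    rw [hfrac, Real.le_sqrt (by positivity) (div_nonneg (by linarith) ht.le), div_pow,
      Real.sq_sqrt (by linarith)]
    gcongr
    linarith
  have hcoef : 4 / 25 ≤ 4 / t ^ 2 := by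
    gcongr
    nlinarith
  calc 2 / 75 * Real.sqrt (t - 4) = 4 / 25 * ((Real.sqrt (t - 4) / 3) / 2) := by ring
    _ ≤ 4 / t ^ 2 * artanh (Real.sqrt (1 - 4 / t)) := by
        gcongr
        exact (div_le_div_of_nonneg_right hx_ge zero_le_two).trans
          (half_le_artanh_s5 (Real.sqrt_nonneg _) hx_lt_one)

lemma tendsto_inv_sqrt_nhdsGT_zero :
    Tendsto (fun ε : ℝ => (Real.sqrt ε)⁻¹) (𝓝[>] 0) atTop := by
  refine tendsto_inv_nhdsGT_zero.comp (tendsto_nhdsWithin_iff.mpr ⟨?_, ?_⟩)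
  · exact (Real.continuous_sqrt.tendsto' 0 0 Real.sqrt_zero).mono_left nhdsWithin_le_nhds
  · filter_upwards [self_mem_nhdsWithin] with ε hε
    exact Real.sqrt_pos.mpr hε

lemma tendsto_hallArtanhTerm_div :
    Tendsto (fun ε : ℝ => hallArtanhTerm (4 + ε) / ε) (𝓝[>] 0) atTop := by
  refine tendsto_atTop_mono' _ ?_ (tendsto_inv_sqrt_nhdsGT_zero.const_mul_atTop
    (by norm_num : (0 : ℝ) < 2 / 75))
  filter_upwards [Ioo_mem_nhdsGT (by norm_num : (0 : ℝ) < 1)] with ε ⟨hε₀, hε₁⟩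
  have hbound := sqrt_sub_four_le_hallArtanhTerm (t := 4 + ε) (by linarith) (by linarith)
  rw [add_sub_cancel_left] at hbound
  calc 2 / 75 * (Real.sqrt ε)⁻¹ = 2 / 75 * Real.sqrt ε / ε := by
        rw [mul_div_assoc, Real.sqrt_div_self']
        ring
    _ ≤ hallArtanhTerm (4 + ε) / ε := by gcongr

/-- The left-hand derivative of the Hall pdf at `4` is `(1 - 4 log 2)/32`, its right-hand
difference quotients at `4` tend to `-∞`, and it is not differentiable at `4`. -/
theorem hall_one_sided_derivs_at_four :
    Tendsto (fun ε : ℝ => (hallPdf 4 - hallPdf (4 - ε)) / ε) (nhdsWithin 0 (Ioi 0))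
      (nhds ((1 - 4 * Real.log 2) / 32)) ∧
    Tendsto (fun ε : ℝ => (hallPdf (4 + ε) - hallPdf 4) / ε) (nhdsWithin 0 (Ioi 0))
      atBot ∧
    ¬ DifferentiableAt ℝ hallPdf 4 := by
  have hderiv := hasDerivAt_hallLogTerm_four
  have hleft : Tendsto (fun ε : ℝ => (hallPdf 4 - hallPdf (4 - ε)) / ε) (𝓝[>] 0)
      (𝓝 ((1 - 4 * Real.log 2) / 32)) := by
    have hneg : Tendsto (fun ε : ℝ => -ε) (𝓝[>] 0) (𝓝[<] 0) := by
      simpa using tendsto_neg_nhdsGT_neg (a := (0 : ℝ))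
    refine (hderiv.tendsto_slope_zero_left.comp hneg).congr' ?_
    filter_upwards [Ioo_mem_nhdsGT (by norm_num : (0 : ℝ) < 3)] with ε ⟨hε₀, hε₃⟩
    rw [Function.comp_apply, smul_eq_mul, ← sub_eq_add_neg, hallPdf_four_s5,
      hallPdf_of_mem_Ico_s5 (by linarith) (by linarith)]
    field_simp
    ring
  have hright : Tendsto (fun ε : ℝ => (hallPdf (4 + ε) - hallPdf 4) / ε) (𝓝[>] 0) atBot := by
    refine (hderiv.tendsto_slope_zero_right.add_atBot
      (tendsto_neg_atTop_atBot.comp tendsto_hallArtanhTerm_div)).congr' ?_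
    filter_upwards [self_mem_nhdsWithin] with ε (hε : 0 < ε)
    rw [hallPdf_of_four_le_s5 (by linarith), hallPdf_four_s5, Function.comp_apply, smul_eq_mul]
    ring
  refine ⟨hleft, hright, fun hdiff => ?_⟩
  have hslope := hdiff.hasDerivAt.tendsto_slope_zero_right
  simp only [smul_eq_mul, inv_mul_eq_div] at hslope
  exact not_tendsto_atBot_of_tendsto_nhds hslope hright
end

section
/- The Hall distribution pdf integrates to one: ∫₀^∞ h(t) dt = 1. -/
/-!
On `[1, ∞)` the density is `2 log t / t²` minus the correction `4 / t² · artanh √(1 - 4/t)`,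
which vanishes on `[1, 4]`. The first term has primitive `-2 (log t + 1) / t` and integrates
to `2`; the correction has primitive `√(1 - 4/t) - (4/t) artanh √(1 - 4/t)`, which rises from `0`
at `t = 4` to `1` at infinity. Both integrands are nonnegative, so their integrability follows
from the limits of the primitives.
-/

open Set Filter Topology MeasureTheory

section Artanh

variable {x : ℝ}

theorem hasDerivAt_artanh (h₁ : -1 < x) (h₂ : x < 1) : HasDerivAt artanh (1 - x ^ 2)⁻¹ x := by
  have hnum : 1 + x ≠ 0 := by linarith
  have hden : 1 - x ≠ 0 := by linarith
  have hquot : HasDerivAt (fun y => (1 + y) / (1 - y)) (2 / (1 - x) ^ 2) x :=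
    (((hasDerivAt_id' x).const_add 1).div ((hasDerivAt_id' x).const_sub 1) hden).congr_deriv
      (by ring)
  refine ((hquot.log (div_ne_zero hnum hden)).const_mul (1 / 2 : ℝ)).congr_deriv ?_
  rw [show 1 - x ^ 2 = (1 + x) * (1 - x) by ring]
  field_simp

theorem artanh_nonneg (h₀ : 0 ≤ x) (h₁ : x < 1) : 0 ≤ artanh x :=
  mul_nonneg (by norm_num) (Real.log_nonneg ((one_le_div (by linarith)).mpr (by linarith)))

theorem artanh_le_half_log (h₀ : 0 ≤ x) (h₁ : x < 1) :
    artanh x ≤ Real.log (4 / (1 - x ^ 2)) / 2 := by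
  have hquot : (1 + x) / (1 - x) ≤ 4 / (1 - x ^ 2) := by
    rw [div_le_div_iff₀ (by linarith) (by nlinarith)]
    nlinarith [mul_pos (by linarith : (0 : ℝ) < 1 - x) (by nlinarith : (0 : ℝ) < (1 - x) * (3 + x))]
  have := Real.log_le_log (div_pos (by linarith) (by linarith)) hquot
  unfold artanh
  linarith

end Artanh

section SqrtOneSubFourDiv

variable {t : ℝ}

theorem sqrt_one_sub_four_div_lt_one (ht : 0 < t) : √(1 - 4 / t) < 1 := by
  rw [Real.sqrt_lt' one_pos]
  have : 0 < 4 / t := by positivity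
  linarith

theorem one_sub_four_div_pos (ht : 4 < t) : 0 < 1 - 4 / t := by
  rw [sub_pos, div_lt_one (by linarith)]
  exact ht

theorem hasDerivAt_sqrt_one_sub_four_div (ht : 4 < t) :
    HasDerivAt (fun t => √(1 - 4 / t)) (2 / (t ^ 2 * √(1 - 4 / t))) t := by
  have ht0 : t ≠ 0 := by linarith
  have hinner : HasDerivAt (fun t => 1 - 4 / t) (4 / t ^ 2) t :=
    (((hasDerivAt_const t 4).div (hasDerivAt_id' t) ht0).const_sub 1).congr_deriv (by ring)
  refine (hinner.sqrt (one_sub_four_div_pos ht).ne').congr_deriv ?_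
  field_simp
  norm_num

theorem hasDerivAt_artanh_sqrt_one_sub_four_div (ht : 4 < t) :
    HasDerivAt (fun t => artanh √(1 - 4 / t)) (1 / (2 * t * √(1 - 4 / t))) t := by
  have hpos := one_sub_four_div_pos ht
  have hs : 0 < √(1 - 4 / t) := Real.sqrt_pos.mpr hpos
  refine ((hasDerivAt_artanh (by linarith) (sqrt_one_sub_four_div_lt_one (by linarith))).comp t
    (hasDerivAt_sqrt_one_sub_four_div ht)).congr_deriv ?_
  rw [Real.sq_sqrt hpos.le]
  have : t ≠ 0 := by linarith
  field_simp
  ring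

-- Junk value: `Real.sqrt` of a negative number is `0`.
theorem artanh_sqrt_one_sub_four_div_of_le (ht₀ : 0 < t) (ht : t ≤ 4) :
    artanh √(1 - 4 / t) = 0 := by
  rw [Real.sqrt_eq_zero'.mpr (by rw [sub_nonpos, le_div_iff₀ ht₀]; linarith)]
  simp [artanh]

theorem artanh_sqrt_one_sub_four_div_le (ht : 4 ≤ t) :
    artanh √(1 - 4 / t) ≤ Real.log t / 2 := by
  have ht0 : 0 < t := by linarith
  convert artanh_le_half_log (Real.sqrt_nonneg _) (sqrt_one_sub_four_div_lt_one ht0) using 3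
  rw [Real.sq_sqrt (by rw [sub_nonneg, div_le_one ht0]; exact ht)]
  field_simp
  ring

end SqrtOneSubFourDiv

theorem hasDerivAt_neg_log_add_one_div {t : ℝ} (ht : 0 < t) :
    HasDerivAt (fun t => -(Real.log t + 1) / t) (Real.log t / t ^ 2) t := by
  have hnum : HasDerivAt (fun t => -(Real.log t + 1)) (-t⁻¹) t :=
    ((Real.hasDerivAt_log ht.ne').add_const 1).neg
  refine (hnum.div (hasDerivAt_id' t) ht.ne').congr_deriv ?_
  field_simp
  ring

theorem tendsto_neg_log_add_one_div_atTop :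
    Tendsto (fun t => -(Real.log t + 1) / t) atTop (𝓝 0) := by
  have hlog : Tendsto (fun t => Real.log t / t) atTop (𝓝 0) :=
    Real.isLittleO_log_id_atTop.tendsto_div_nhds_zero
  have hinv : Tendsto (fun t : ℝ => 1 / t) atTop (𝓝 0) :=
    tendsto_const_nhds.div_atTop tendsto_id
  simpa [neg_div, add_div] using (hlog.add hinv).neg

theorem log_div_sq_nonneg {t : ℝ} (ht : 1 ≤ t) : 0 ≤ Real.log t / t ^ 2 :=
  div_nonneg (Real.log_nonneg ht) (sq_nonneg t)

theorem integrableOn_log_div_sq_Ioi_one :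
    IntegrableOn (fun t => Real.log t / t ^ 2) (Ioi 1) :=
  integrableOn_Ioi_deriv_of_nonneg
    (hasDerivAt_neg_log_add_one_div one_pos).continuousAt.continuousWithinAt
    (fun _ ht => hasDerivAt_neg_log_add_one_div (zero_lt_one.trans ht))
    (fun _ ht => log_div_sq_nonneg (le_of_lt ht)) tendsto_neg_log_add_one_div_atTop

theorem integral_log_div_sq_Ioi_one : ∫ t in Ioi 1, Real.log t / t ^ 2 = 1 := by
  rw [integral_Ioi_of_hasDerivAt_of_nonneg
    (hasDerivAt_neg_log_add_one_div one_pos).continuousAt.continuousWithinAt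
    (fun _ ht => hasDerivAt_neg_log_add_one_div (zero_lt_one.trans ht))
    (fun _ ht => log_div_sq_nonneg (le_of_lt ht)) tendsto_neg_log_add_one_div_atTop]
  norm_num

noncomputable def hallCorrection (t : ℝ) : ℝ := 4 / t ^ 2 * artanh √(1 - 4 / t)

noncomputable def hallCorrectionPrimitive (t : ℝ) : ℝ :=
  √(1 - 4 / t) - 4 / t * artanh √(1 - 4 / t)

section HallCorrection

variable {t : ℝ}

theorem hallCorrection_eq_zero_of_le (ht₀ : 0 < t) (ht : t ≤ 4) : hallCorrection t = 0 := by
  rw [hallCorrection, artanh_sqrt_one_sub_four_div_of_le ht₀ ht, mul_zero]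

theorem hallCorrection_nonneg (ht : 4 ≤ t) : 0 ≤ hallCorrection t :=
  mul_nonneg (by positivity)
    (artanh_nonneg (Real.sqrt_nonneg _) (sqrt_one_sub_four_div_lt_one (by linarith)))

theorem hasDerivAt_hallCorrectionPrimitive (ht : 4 < t) :
    HasDerivAt hallCorrectionPrimitive (hallCorrection t) t := by
  have ht0 : t ≠ 0 := by linarith
  have hfour : HasDerivAt (fun t => 4 / t) (-4 / t ^ 2) t :=
    ((hasDerivAt_const t 4).div (hasDerivAt_id' t) ht0).congr_deriv (by ring)
  refine ((hasDerivAt_sqrt_one_sub_four_div ht).sub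
    (hfour.mul (hasDerivAt_artanh_sqrt_one_sub_four_div ht))).congr_deriv ?_
  rw [hallCorrection]
  field_simp
  ring

theorem hallCorrectionPrimitive_four : hallCorrectionPrimitive 4 = 0 := by
  norm_num [hallCorrectionPrimitive, artanh]

theorem continuousAt_hallCorrectionPrimitive_four : ContinuousAt hallCorrectionPrimitive 4 := by
  have hs : ContinuousAt (fun t : ℝ => √(1 - 4 / t)) 4 := by fun_prop (disch := norm_num)
  have hartanh : ContinuousAt artanh (√(1 - 4 / 4)) := by
    rw [show √(1 - 4 / 4 : ℝ) = 0 by norm_num]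
    exact (hasDerivAt_artanh (by norm_num) (by norm_num)).continuousAt
  exact hs.sub ((continuousAt_const.div continuousAt_id (by norm_num)).mul
    (hartanh.comp (f := fun t => √(1 - 4 / t)) hs))

theorem tendsto_hallCorrectionPrimitive_atTop :
    Tendsto hallCorrectionPrimitive atTop (𝓝 1) := by
  have hs : Tendsto (fun t : ℝ => √(1 - 4 / t)) atTop (𝓝 1) := by
    simpa using ((tendsto_const_nhds.div_atTop tendsto_id).const_sub 1).sqrt
  have hlog : Tendsto (fun t => 2 * (Real.log t / t)) atTop (𝓝 0) := by
    simpa using Real.isLittleO_log_id_atTop.tendsto_div_nhds_zero.const_mul 2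
  have hcorr : Tendsto (fun t => 4 / t * artanh √(1 - 4 / t)) atTop (𝓝 0) := by
    refine squeeze_zero' ?_ ?_ hlog
    · filter_upwards [eventually_ge_atTop 4] with t ht
      exact mul_nonneg (by positivity)
        (artanh_nonneg (Real.sqrt_nonneg _) (sqrt_one_sub_four_div_lt_one (by linarith)))
    · filter_upwards [eventually_ge_atTop 4] with t ht
      calc 4 / t * artanh √(1 - 4 / t) ≤ 4 / t * (Real.log t / 2) :=
            mul_le_mul_of_nonneg_left (artanh_sqrt_one_sub_four_div_le ht) (by positivity)
        _ = 2 * (Real.log t / t) := by ring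
  rw [← sub_zero 1]
  exact hs.sub hcorr

theorem integrableOn_hallCorrection_Ioi_four : IntegrableOn hallCorrection (Ioi 4) :=
  integrableOn_Ioi_deriv_of_nonneg continuousAt_hallCorrectionPrimitive_four.continuousWithinAt
    (fun _ ht => hasDerivAt_hallCorrectionPrimitive ht)
    (fun _ ht => hallCorrection_nonneg (le_of_lt ht)) tendsto_hallCorrectionPrimitive_atTop

theorem integral_hallCorrection_Ioi_four : ∫ t in Ioi 4, hallCorrection t = 1 := by
  rw [integral_Ioi_of_hasDerivAt_of_nonneg
    continuousAt_hallCorrectionPrimitive_four.continuousWithinAt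
    (fun _ ht => hasDerivAt_hallCorrectionPrimitive ht)
    (fun _ ht => hallCorrection_nonneg (le_of_lt ht)) tendsto_hallCorrectionPrimitive_atTop,
    hallCorrectionPrimitive_four, sub_zero]

theorem integrableOn_hallCorrection_Ioi_one : IntegrableOn hallCorrection (Ioi 1) :=
  integrableOn_hallCorrection_Ioi_four.of_forall_sdiff_eq_zero measurableSet_Ioi
    fun _ ht => hallCorrection_eq_zero_of_le (zero_lt_one.trans ht.1) (not_lt.mp ht.2)

theorem integral_hallCorrection_Ioi_one : ∫ t in Ioi 1, hallCorrection t = 1 := by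
  rw [setIntegral_eq_of_subset_of_forall_sdiff_eq_zero measurableSet_Ioi
    (Ioi_subset_Ioi (by norm_num)) fun _ ht =>
      hallCorrection_eq_zero_of_le (zero_lt_one.trans ht.1) (not_lt.mp ht.2),
    integral_hallCorrection_Ioi_four]

end HallCorrection

theorem hallPdf_eq_zero_of_le_one {t : ℝ} (ht : t ≤ 1) : hallPdf t = 0 := by
  rcases ht.lt_or_eq with ht | rfl
  · simp [hallPdf, ht]
  · norm_num [hallPdf]

theorem hallPdf_eq_of_one_le {t : ℝ} (ht : 1 ≤ t) :
    hallPdf t = 2 * (Real.log t / t ^ 2) - hallCorrection t := by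
  rw [hallPdf, if_neg (not_lt.mpr ht), ← hallCorrection, mul_div_assoc]
  split_ifs with h4
  · rw [hallCorrection_eq_zero_of_le (by linarith) h4.le, sub_zero]
  · rfl

open MeasureTheory in
/-- The Hall pdf integrates to one over `(0, ∞)`. -/
theorem hall_integral_eq_one : ∫ t in Set.Ioi (0 : ℝ), hallPdf t = 1 := by
  calc ∫ t in Ioi 0, hallPdf t = ∫ t in Ioi 1, hallPdf t :=
        setIntegral_eq_of_subset_of_forall_sdiff_eq_zero measurableSet_Ioi
          (Ioi_subset_Ioi zero_le_one) fun _ ht => hallPdf_eq_zero_of_le_one (not_lt.mp ht.2)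
    _ = ∫ t in Ioi 1, (2 * (Real.log t / t ^ 2) - hallCorrection t) :=
        setIntegral_congr_fun measurableSet_Ioi fun _ ht => hallPdf_eq_of_one_le (le_of_lt ht)
    _ = 2 * 1 - 1 := by
        rw [integral_sub (integrableOn_log_div_sq_Ioi_one.const_mul 2)
          integrableOn_hallCorrection_Ioi_one, integral_const_mul, integral_log_div_sq_Ioi_one,
          integral_hallCorrection_Ioi_one]
    _ = 1 := by norm_num
end

section
/- Let Λ ⊆ ℝ² be locally finite (every bounded subset of ℝ² contains only finitely many points of Λ), with every (x,y) ∈ Λ satisfying x > 0 and y ≥ 0. Suppose Λ contains a point with positive second coordinate, let y₀ := min{y : (x,y) ∈ Λ, y > 0} (assumed attained), let x₀ := min{x : (x, y₀) ∈ Λ} (assumed attained), and let α > 0. Define Ω := {(a,b) ∈ ℝ² : 0 < b ≤ 1, (x₀ b − 1)/y₀ ≤ a < (x₀ b − 1)/y₀ + α b}, for y > 0 define the strip S(x,y) := {(a,b) ∈ ℝ² : 0 < b x − a y ≤ 1}, and say that (x,y) ∈ Λ with y > 0 wins at a point q ∈ Ω if q ∈ S(x,y) and y/x < y'/x' for every (x',y')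 ∈ Λ with y' > 0, (x',y') ≠ (x,y), and q ∈ S(x',y'). Then: if (x,y) ∈ Λ wins at some point of Ω, the point p := ((x−1)/y, 1) satisfies (x₀−1)/y₀ ≤ (x−1)/y ≤ (x₀−1)/y₀ + α, the vector (x,y) wins at p, and the set {a ∈ ℝ : (x,y) wins at (a,1)} is an interval with nonempty interior whose left endpoint is (x−1)/y. -/
/-- The candidacy strip of a vector `(x, y)` in the rotated parametrization:
`{(a,b) : 0 < bx - ay ≤ 1}`. -/
def candidacyStrip (x y : ℝ) : Set (ℝ × ℝ) :=
  {p : ℝ × ℝ | 0 < p.2 * x - p.1 * y ∧ p.2 * x - p.1 * y ≤ 1}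

/-- The vector `v` wins at the point `q` (relative to the set `Λ` of holonomy vectors):
`q` lies in the candidacy strip of `v`, and `v` has strictly smaller slope than every other
candidate vector of `Λ` whose strip contains `q`. -/
def Wins (Λ : Set (ℝ × ℝ)) (v q : ℝ × ℝ) : Prop :=
  q ∈ candidacyStrip v.1 v.2 ∧
    ∀ w ∈ Λ, 0 < w.2 → w ≠ v → q ∈ candidacyStrip w.1 w.2 → v.2 / v.1 < w.2 / w.1

/-!
Write `cross w q = w₁ q₂ - q₁ w₂`, so that the strip of `w` is `0 < cross w · ≤ 1`. In the upper
half plane a competitor `w` of slope at most that of `v` is harmless at `q` exactly when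
`cross w q > 1`. Since `v₂ cross w p - w₂ cross v p = p₂ (v₂ w₁ - w₂ v₁)` is nondecreasing in the
height `p₂`, moving from a winning point to a point at least as high on which `cross v` is at least
as large keeps every such competitor harmless. This gives the win at `((v₁ - 1)/v₂, 1)`, where
`cross v = 1`, and the order-connectedness of the winning set on the top edge. Just right of that
point only competitors of bounded length can interfere, finitely many by local finiteness, so the
win persists on an interval.
-/

open Filter Topology

def cross (w q : ℝ × ℝ) : ℝ := q.2 * w.1 - q.1 * w.2

lemma mem_candidacyStrip {w q : ℝ × ℝ} :
    q ∈ candidacyStrip w.1 w.2 ↔ 0 < cross w q ∧ cross w q ≤ 1 := Iff.rfl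

lemma cross_mk_one (w : ℝ × ℝ) (a : ℝ) : cross w (a, 1) = w.1 - a * w.2 := by
  simp [cross]

lemma cross_top_endpoint {v : ℝ × ℝ} (hv2 : v.2 ≠ 0) : cross v ((v.1 - 1) / v.2, 1) = 1 := by
  rw [cross_mk_one, div_mul_cancel₀ _ hv2]; ring

lemma mul_cross_sub_mul_cross (v w p : ℝ × ℝ) :
    v.2 * cross w p - w.2 * cross v p = p.2 * (v.2 * w.1 - w.2 * v.1) := by
  simp only [cross]; ring

section Comparison

variable {v w p q : ℝ × ℝ}

lemma cross_pos_of_slope_le (hv2 : 0 < v.2) (hw2 : 0 < w.2) (hslope : w.2 * v.1 ≤ v.2 * w.1)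
    (hp2 : 0 ≤ p.2) (hp : 0 < cross v p) : 0 < cross w p := by
  have key := mul_cross_sub_mul_cross v w p
  have : 0 < v.2 * cross w p := by nlinarith [mul_nonneg hp2 (sub_nonneg.2 hslope)]
  exact pos_of_mul_pos_right this hv2.le

lemma cross_le_cross_of_slope_le (hv2 : 0 < v.2) (hw2 : 0 ≤ w.2)
    (hslope : w.2 * v.1 ≤ v.2 * w.1) (h2 : q.2 ≤ p.2) (hcross : cross v q ≤ cross v p) :
    cross w q ≤ cross w p := by
  have hp := mul_cross_sub_mul_cross v w p
  have hq := mul_cross_sub_mul_cross v w q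
  have : v.2 * cross w q ≤ v.2 * cross w p := by
    nlinarith [mul_le_mul_of_nonneg_right h2 (sub_nonneg.2 hslope),
      mul_le_mul_of_nonneg_left hcross hw2]
  exact le_of_mul_le_mul_left this hv2

end Comparison

section Wins

variable {Λ : Set (ℝ × ℝ)} {v p q : ℝ × ℝ}

theorem wins_iff (hΛ : ∀ w ∈ Λ, 0 < w.1) (hv1 : 0 < v.1) (hv2 : 0 < v.2) (hq2 : 0 ≤ q.2) :
    Wins Λ v q ↔ q ∈ candidacyStrip v.1 v.2 ∧
      ∀ w ∈ Λ, 0 < w.2 → w ≠ v → w.2 * v.1 ≤ v.2 * w.1 → 1 < cross w q := by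
  refine and_congr_right fun hq => forall₂_congr fun w hw => imp_congr_right fun hw2 =>
    imp_congr_right fun _ => ?_
  rw [← div_le_div_iff₀ (hΛ w hw) hv1]
  constructor
  · intro h hslope
    by_contra! hle
    exact (h ⟨cross_pos_of_slope_le hv2 hw2 ((div_le_div_iff₀ (hΛ w hw) hv1).1 hslope) hq2 hq.1,
      hle⟩).not_ge hslope
  · intro h hw
    by_contra! hslope
    exact (h hslope).not_ge hw.2

theorem Wins.of_cross_le (hΛ : ∀ w ∈ Λ, 0 < w.1) (hv1 : 0 < v.1) (hv2 : 0 < v.2)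
    (hq2 : 0 ≤ q.2) (h : Wins Λ v q) (hp : p ∈ candidacyStrip v.1 v.2) (h2 : q.2 ≤ p.2)
    (hcross : cross v q ≤ cross v p) : Wins Λ v p := by
  rw [wins_iff hΛ hv1 hv2 hq2] at h
  rw [wins_iff hΛ hv1 hv2 (hq2.trans h2)]
  exact ⟨hp, fun w hw hw2 hne hslope => (h.2 w hw hw2 hne hslope).trans_le
    (cross_le_cross_of_slope_le hv2 hw2.le hslope h2 hcross)⟩

theorem Wins.slope_le (hΛ : ∀ w ∈ Λ, 0 < w.1) (hv1 : 0 < v.1) (hv2 : 0 < v.2) (hq2 : 0 ≤ q.2)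
    (h : Wins Λ v q) {u : ℝ × ℝ} (hu : u ∈ Λ) (hu2 : 0 < u.2) (huq : cross u q ≤ 1) :
    v.2 * u.1 ≤ u.2 * v.1 := by
  rcases eq_or_ne u v with rfl | hne
  · rw [mul_comm]
  by_contra! hslope
  exact ((wins_iff hΛ hv1 hv2 hq2).1 h |>.2 u hu hu2 hne hslope.le).not_ge huq

theorem Wins.top_endpoint (hΛ : ∀ w ∈ Λ, 0 < w.1) (hv1 : 0 < v.1) (hv2 : 0 < v.2)
    (hq2 : 0 ≤ q.2) (hq21 : q.2 ≤ 1) (h : Wins Λ v q) : Wins Λ v ((v.1 - 1) / v.2, 1) := by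
  have hA := cross_top_endpoint hv2.ne'
  refine h.of_cross_le hΛ hv1 hv2 hq2 ?_ hq21 (hA.symm ▸ h.1.2)
  rw [mem_candidacyStrip, hA]
  exact ⟨one_pos, le_rfl⟩

theorem ordConnected_wins_top_edge (hΛ : ∀ w ∈ Λ, 0 < w.1) (hv1 : 0 < v.1) (hv2 : 0 < v.2) :
    {a : ℝ | Wins Λ v (a, 1)}.OrdConnected := by
  refine ⟨fun x hx y hy z hz => ?_⟩
  have hxs := mem_candidacyStrip.1 hx.1
  have hys := mem_candidacyStrip.1 hy.1
  simp only [cross_mk_one] at hxs hys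
  have hzx := mul_le_mul_of_nonneg_right hz.1 hv2.le
  have hzy := mul_le_mul_of_nonneg_right hz.2 hv2.le
  refine Wins.of_cross_le hΛ hv1 hv2 zero_le_one hy ?_ le_rfl ?_
  · rw [mem_candidacyStrip, cross_mk_one]
    constructor <;> linarith
  · rw [cross_mk_one, cross_mk_one]
    linarith

theorem isLeast_wins_top_edge (hv2 : 0 < v.2) (h : Wins Λ v ((v.1 - 1) / v.2, 1)) :
    IsLeast {a : ℝ | Wins Λ v (a, 1)} ((v.1 - 1) / v.2) := by
  refine ⟨h, fun a ha => ?_⟩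
  have := (mem_candidacyStrip.1 ha.1).2
  rw [cross_mk_one] at this
  rw [div_le_iff₀ hv2]
  linarith

end Wins

lemma one_lt_cross_of_long {v w : ℝ × ℝ} {a : ℝ} (hv1 : 0 < v.1) (hw2 : 0 < w.2)
    (hslope : w.2 * v.1 ≤ v.2 * w.1) (ha : a * v.2 < v.1 - 1 / 2) (hw1 : 2 * v.1 + 1 < w.1) :
    1 < cross w (a, 1) := by
  rw [cross_mk_one]
  rcases le_or_gt 0 a with ha0 | ha0
  · have : 2 * v.1 * 1 < 2 * v.1 * (w.1 - a * w.2) := by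
      nlinarith [mul_le_mul_of_nonneg_left hslope ha0, mul_le_mul_of_nonneg_right ha.le
        (hv1.le.trans (by linarith : v.1 ≤ w.1))]
    exact lt_of_mul_lt_mul_left this (by positivity)
  · nlinarith [mul_neg_of_neg_of_pos ha0 hw2]

theorem eventually_wins_top_edge {Λ : Set (ℝ × ℝ)} {v : ℝ × ℝ}
    (hloc : ∀ B : Set (ℝ × ℝ), Bornology.IsBounded B → (Λ ∩ B).Finite)
    (hΛ : ∀ w ∈ Λ, 0 < w.1) (hv1 : 0 < v.1) (hv2 : 0 < v.2)
    (h : Wins Λ v ((v.1 - 1) / v.2, 1)) :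
    ∀ᶠ a in 𝓝[>] ((v.1 - 1) / v.2), Wins Λ v (a, 1) := by
  set A := (v.1 - 1) / v.2
  set R := 2 * v.1 + 1
  have hAv : A * v.2 = v.1 - 1 := div_mul_cancel₀ _ hv2.ne'
  have hcont (w : ℝ × ℝ) :
      Tendsto (fun a : ℝ => cross w (a, 1)) (𝓝 A) (𝓝 (cross w (A, 1))) := by
    simp only [cross_mk_one]
    exact Continuous.tendsto (by fun_prop) A
  rw [wins_iff hΛ hv1 hv2 zero_le_one] at h
  set S := {w ∈ Λ | w ≠ v ∧ 0 < w.2 ∧ w.2 * v.1 ≤ v.2 * w.1 ∧ w.1 ≤ R}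
  have hS : S.Finite := by
    refine (hloc (Set.Icc 0 R ×ˢ Set.Icc 0 (v.2 * R / v.1))
      (Metric.isBounded_Icc _ _ |>.prod (Metric.isBounded_Icc _ _))).subset ?_
    rintro w ⟨hw, -, hw2, hslope, hw1⟩
    refine ⟨hw, ⟨(hΛ w hw).le, hw1⟩, hw2.le, ?_⟩
    rw [le_div_iff₀ hv1]
    nlinarith
  have hnear : ∀ᶠ a in 𝓝 A, a * v.2 < v.1 - 1 / 2 :=
    ((continuous_mul_const v.2).tendsto A).eventually_lt_const (by linarith)
  have hstrip : ∀ᶠ a in 𝓝 A, 0 < cross v (a, 1) :=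
    (hcont v).eventually_const_lt (by rw [cross_top_endpoint hv2.ne']; exact one_pos)
  have hshort : ∀ᶠ a in 𝓝 A, ∀ w ∈ S, 1 < cross w (a, 1) :=
    (eventually_all_finite hS).2 fun w hw =>
      (hcont w).eventually_const_lt (h.2 w hw.1 hw.2.2.1 hw.2.1 hw.2.2.2.1)
  filter_upwards [nhdsWithin_le_nhds (hnear.and (hstrip.and hshort)), self_mem_nhdsWithin]
    with a ⟨hnear, hstrip, hshort⟩ hAa
  rw [wins_iff hΛ hv1 hv2 zero_le_one]
  refine ⟨mem_candidacyStrip.2 ⟨hstrip, ?_⟩, fun w hw hw2 hne hslope => ?_⟩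
  · rw [cross_mk_one]
    nlinarith [mul_lt_mul_of_pos_right (Set.mem_Ioi.1 hAa) hv2]
  · rcases le_or_gt w.1 R with hw1 | hw1
    · exact hshort w ⟨hw, hne, hw2, hslope, hw1⟩
    · exact one_lt_cross_of_long hv1 hw2 hslope hnear hw1

lemma sub_one_div_le_sub_one_div {x y x₀ y₀ : ℝ} (hy₀ : 0 < y₀) (hy : y₀ ≤ y)
    (hslope : y * x₀ ≤ y₀ * x) : (x₀ - 1) / y₀ ≤ (x - 1) / y := by
  rw [div_le_div_iff₀ hy₀ (hy₀.trans_le hy)]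
  linarith

lemma add_neg_of_add_mul_neg {c d t : ℝ} (hc : 0 ≤ c) (ht : 0 < t) (ht1 : t ≤ 1)
    (h : c + d * t < 0) : c + d < 0 := by
  nlinarith

-- The line `b x - a y = 1` lies right of the line `b x₀ - a y₀ = 1 - α y₀ b` at height `0`
-- and left of it at height `b`, hence also at height `1`.
lemma sub_one_div_lt_of_lt {x y x₀ y₀ α a b : ℝ} (hy₀ : 0 < y₀) (hy : y₀ ≤ y) (hb : 0 < b)
    (hb1 : b ≤ 1) (ha : a < (x₀ * b - 1) / y₀ + α * b) (hstrip : b * x - a * y ≤ 1) :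
    (x - 1) / y < (x₀ - 1) / y₀ + α := by
  have hab : (b * x - 1) / y ≤ a := by
    rw [div_le_iff₀ (hy₀.trans_le hy)]
    linarith
  have hat_b : 1 / y₀ - 1 / y + (x / y - x₀ / y₀ - α) * b =
      (b * x - 1) / y - ((x₀ * b - 1) / y₀ + α * b) := by ring
  have hat_one : 1 / y₀ - 1 / y + (x / y - x₀ / y₀ - α) =
      (x - 1) / y - ((x₀ - 1) / y₀ + α) := by ring
  have := add_neg_of_add_mul_neg (sub_nonneg.2 (one_div_le_one_div_of_le hy₀ hy)) hb hb1
    (by linarith : 1 / y₀ - 1 / y + (x / y - x₀ / y₀ - α) * b < 0)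
  linarith

theorem winner_wins_on_top_edge_general (Λ : Set (ℝ × ℝ))
    (hloc : ∀ B : Set (ℝ × ℝ), Bornology.IsBounded B → (Λ ∩ B).Finite)
    (hpos : ∀ p ∈ Λ, 0 < p.1 ∧ 0 ≤ p.2)
    (y₀ x₀ α : ℝ)
    (hy₀pos : 0 < y₀)
    (hx₀mem : (x₀, y₀) ∈ Λ)
    (hy₀min : ∀ p ∈ Λ, 0 < p.2 → y₀ ≤ p.2)
    (Ω : Set (ℝ × ℝ))
    (hΩ : Ω = {p : ℝ × ℝ | 0 < p.2 ∧ p.2 ≤ 1 ∧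
        (x₀ * p.2 - 1) / y₀ ≤ p.1 ∧ p.1 < (x₀ * p.2 - 1) / y₀ + α * p.2})
    (v : ℝ × ℝ) (hv : v ∈ Λ) (hvy : 0 < v.2)
    (q : ℝ × ℝ) (hq : q ∈ Ω) (hwin : Wins Λ v q) :
    ((x₀ - 1) / y₀ ≤ (v.1 - 1) / v.2 ∧ (v.1 - 1) / v.2 ≤ (x₀ - 1) / y₀ + α) ∧
    Wins Λ v ((v.1 - 1) / v.2, 1) ∧
    ({a : ℝ | Wins Λ v (a, 1)}.OrdConnected ∧
      (interior {a : ℝ | Wins Λ v (a, 1)}).Nonempty ∧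
      IsLeast {a : ℝ | Wins Λ v (a, 1)} ((v.1 - 1) / v.2)) := by
  rw [hΩ] at hq
  obtain ⟨hq2, hq21, hq1l, hq1r⟩ := hq
  have hΛ : ∀ w ∈ Λ, 0 < w.1 := fun w hw => (hpos w hw).1
  have hv1 := hΛ v hv
  have hy₀v := hy₀min v hv hvy
  have hx₀q : cross (x₀, y₀) q ≤ 1 := by
    rw [div_le_iff₀ hy₀pos] at hq1l
    simp only [cross]
    linarith
  have hslope := hwin.slope_le hΛ hv1 hvy hq2.le hx₀mem hy₀pos hx₀q
  have hA := hwin.top_endpoint hΛ hv1 hvy hq2.le hq21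
  have hconn := ordConnected_wins_top_edge hΛ hv1 hvy
  obtain ⟨a, ha, hAa⟩ :=
    ((eventually_wins_top_edge hloc hΛ hv1 hvy hA).and self_mem_nhdsWithin).exists
  refine ⟨⟨sub_one_div_le_sub_one_div hy₀pos hy₀v hslope,
    (sub_one_div_lt_of_lt hy₀pos hy₀v hq2 hq21 hq1r hwin.1.2).le⟩,
    hA, hconn, ?_, isLeast_wins_top_edge hvy hA⟩
  exact (Set.nonempty_Ioo.2 hAa).mono
    (isOpen_Ioo.subset_interior_iff.2 (Set.Ioo_subset_Icc_self.trans (hconn.out hA ha)))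

/-- Every vector that wins somewhere on a Poincaré section component wins on an interval of
the top edge whose left endpoint is `((x-1)/y, 1)`. -/
theorem winner_wins_on_top_edge (Λ : Set (ℝ × ℝ))
    (hloc : ∀ B : Set (ℝ × ℝ), Bornology.IsBounded B → (Λ ∩ B).Finite)
    (hpos : ∀ p ∈ Λ, 0 < p.1 ∧ 0 ≤ p.2)
    (y₀ x₀ α : ℝ) (hα : 0 < α)
    (hy₀pos : 0 < y₀)
    (hx₀mem : (x₀, y₀) ∈ Λ)
    (hy₀min : ∀ p ∈ Λ, 0 < p.2 → y₀ ≤ p.2)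
    (hx₀min : ∀ x : ℝ, (x, y₀) ∈ Λ → x₀ ≤ x)
    (Ω : Set (ℝ × ℝ))
    (hΩ : Ω = {p : ℝ × ℝ | 0 < p.2 ∧ p.2 ≤ 1 ∧
        (x₀ * p.2 - 1) / y₀ ≤ p.1 ∧ p.1 < (x₀ * p.2 - 1) / y₀ + α * p.2})
    (v : ℝ × ℝ) (hv : v ∈ Λ) (hvy : 0 < v.2)
    (q : ℝ × ℝ) (hq : q ∈ Ω) (hwin : Wins Λ v q) :
    ((x₀ - 1) / y₀ ≤ (v.1 - 1) / v.2 ∧ (v.1 - 1) / v.2 ≤ (x₀ - 1) / y₀ + α) ∧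
    Wins Λ v ((v.1 - 1) / v.2, 1) ∧
    ({a : ℝ | Wins Λ v (a, 1)}.OrdConnected ∧
      (interior {a : ℝ | Wins Λ v (a, 1)}).Nonempty ∧
      IsLeast {a : ℝ | Wins Λ v (a, 1)} ((v.1 - 1) / v.2)) :=
  winner_wins_on_top_edge_general Λ hloc hpos y₀ x₀ α hy₀pos hx₀mem hy₀min Ω hΩ v hv hvy q hq hwin
end
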